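/- Let V be an affine Δ-algebraic variety over K, let F be a Δ-field extension of K, and let a ∈ V(F). Then the set of local Δ-derivations at a extending D is in natural bijection with the set of solutions b ∈ F^n of the system { d_{D/Δ}f_a(u) = 0 : f ∈ I(V/K)_Δ }; explicitly, every such solution b gives the local Δ-derivation ξ_b(f) = d_{D/Δ}f_a(b), and every local Δ-derivation ξ at a extending D yields the solution (ξ(x̄₁),...,ξ(x̄_n)). -/

import Mathlib

/-! A local Δ-derivation `ξ` at `a` extending `D` is additive and satisfies the Leibniz rule
twisted by evaluation at `a`, so it is determined by its values on the constants and on the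
variables `θx_k`; commuting with Δ forces `ξ(θx_k) = θ(ξ x_k)`.  The relative differential
`f ↦ d_{D/Δ}f(a, b)` is such a derivation (it commutes with Δ because `D` does), taking the
value `θb_k` on `θx_k`.  Hence `ξ = ξ_b` for `b = (ξ x̄_k)_k`, and `ξ_b` vanishes on `I`
exactly when `b` solves the linearized system. -/

/- Formal framework for relative differential algebra:
   Δ-polynomial rings, relative differentials d_{D/Δ}, prolongations. -/

open MvPolynomial

/-- Multi-indices of derivative operators (the monoid Θ_Δ). -/
abbrev Theta (ι : Type*) := ι →₀ ℕ

/-- Variables `θ x_k` of the Δ-polynomial ring in indeterminates indexed by `κ`. -/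
abbrev DVar (κ ι : Type*) := κ × Theta ι

/-- The Δ-polynomial ring `K{x_k : k ∈ κ}_Δ`. -/
abbrev DPoly (K : Type*) [CommRing K] (κ ι : Type*) := MvPolynomial (DVar κ ι) K

variable {K : Type*} [CommRing K] {κ ι : Type*} [DecidableEq κ] [DecidableEq ι]

/-- Apply a multi-index `θ` of operators from the family `δ` to `a`. -/
noncomputable def thetaApply {A : Type*} (δ : ι → A → A) (θ : Theta ι) (a : A) : A :=
  ((θ.support.toList.map fun j => (δ j)^[θ j]).foldr (· ∘ ·) id) a

/-- Apply a map `D` to all coefficients of a polynomial (`f ↦ f^D`). -/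
noncomputable def mapCoeff {σ : Type*} (D : K → K) (f : MvPolynomial σ K) :
    MvPolynomial σ K :=
  (AddMonoidAlgebra.coeff f).sum fun m c => monomial m (D c)

/-- Evaluation of a Δ-polynomial over `K` at a point `a` of a differential ring `A`
(with derivations `δA`) along the ring homomorphism `φ : K →+* A`. -/
noncomputable def devalAt {A : Type*} [CommRing A] (φ : K →+* A)
    (δA : ι → A → A) (a : κ → A) (f : DPoly K κ ι) : A :=
  eval₂ φ (fun v => thetaApply δA v.2 (a v.1)) f

/-- The relative differential `d_{D/Δ} f` of a Δ-polynomial, as a polynomial in the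
doubled set of variables (`Sum.inl` = the x-variables, `Sum.inr` = the u-variables):
`d_{D/Δ}f(x,u) = Σ_{θ,k} ∂f/∂(θx_k) · θu_k + f^D(x)`. -/
noncomputable def dRel (D : K → K) (f : DPoly K κ ι) :
    MvPolynomial (DVar κ ι ⊕ DVar κ ι) K :=
  (∑ v ∈ f.vars, (rename Sum.inl (pderiv v f)) * X (Sum.inr v))
    + rename Sum.inl (mapCoeff D f)

/-- Evaluation of the relative differential `d_{D/Δ}f` at the pair of points `(a, b)`. -/
noncomputable def dRelEval {A : Type*} [CommRing A] (φ : K →+* A)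
    (δA : ι → A → A) (D : K → K) (a b : κ → A) (f : DPoly K κ ι) : A :=
  eval₂ φ
    (Sum.elim (fun v => thetaApply δA v.2 (a v.1)) (fun v => thetaApply δA v.2 (b v.1)))
    (dRel D f)

/-- The canonical action of the derivation `δ_j` on the Δ-polynomial ring:
it acts on coefficients via `δK j` and shifts the variables `θx_k ↦ (δ_j θ)x_k`. -/
noncomputable def polyDeriv (δK : ι → K → K) (j : ι) (f : DPoly K κ ι) : DPoly K κ ι :=
  mapCoeff (δK j) f + ∑ v ∈ f.vars, pderiv v f * X (v.1, v.2 + Finsupp.single j 1)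

def derivationOfLeibniz {R : Type*} [CommRing R] (D : R → R)
    (hadd : ∀ x y, D (x + y) = D x + D y) (hmul : ∀ x y, D (x * y) = x * D y + D x * y) :
    Derivation ℤ R R :=
  Derivation.mk' (AddMonoidHom.mk' D hadd).toIntLinearMap fun x y => by
    simp [hmul, mul_comm]

section ThetaApply

variable {A ι : Type*}

lemma thetaApply_zero (δ : ι → A → A) : thetaApply δ 0 = id := by
  funext x
  simp [thetaApply]

lemma thetaApply_single (δ : ι → A → A) (j : ι) (m : ℕ) :
    thetaApply δ (Finsupp.single j m) = (δ j)^[m] := by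
  rcases eq_or_ne m 0 with rfl | hm
  · rw [Finsupp.single_zero, thetaApply_zero, Function.iterate_zero]
  · funext x
    simp [thetaApply, Finsupp.support_single, hm]

/- The closure of a commuting family in `Function.End A` is a commutative monoid, in which
`thetaApply δ θ` becomes the product `θ.prod fun j m => δ j ^ m`. -/
open scoped IsMulCommutative in
lemma thetaApply_add (δ : ι → A → A) (hδ : ∀ i j, Function.Commute (δ i) (δ j))
    (θ₁ θ₂ : Theta ι) :
    thetaApply δ (θ₁ + θ₂) = thetaApply δ θ₁ ∘ thetaApply δ θ₂ := by
  let S := Submonoid.closure (Set.range fun j => (show Function.End A from δ j))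
  have : IsMulCommutative S := Submonoid.isMulCommutative_closure _ <| by
    rintro _ ⟨i, rfl⟩ _ ⟨j, rfl⟩
    exact funext (hδ i j)
  let e : ι → S := fun j => ⟨δ j, Submonoid.subset_closure ⟨j, rfl⟩⟩
  have hprod : ∀ θ : Theta ι,
      thetaApply δ θ = ((θ.prod fun j m => e j ^ m : S) : Function.End A) := by
    intro θ
    rw [Finsupp.prod, ← Finset.prod_map_toList, SubmonoidClass.coe_list_prod, List.map_map]
    funext x
    unfold thetaApply
    induction θ.support.toList with
    | nil => rfl
    | cons i t ih =>
      simp only [List.map_cons, List.foldr_cons, List.prod_cons, Function.comp_apply, ih]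
      rfl
  rw [hprod, hprod, hprod,
    Finsupp.prod_add_index' (fun _ => pow_zero _) (fun _ _ _ => pow_add _ _ _)]
  rfl

lemma thetaApply_add_single (δ : ι → A → A) (hδ : ∀ i j, Function.Commute (δ i) (δ j))
    (θ : Theta ι) (j : ι) (x : A) :
    thetaApply δ (θ + Finsupp.single j 1) x = δ j (thetaApply δ θ x) := by
  rw [add_comm, thetaApply_add δ hδ, thetaApply_single, Function.iterate_one, Function.comp_apply]

lemma semiconj_thetaApply {B : Type*} (ξ : A → B) {δA : ι → A → A} {δB : ι → B → B}
    (h : ∀ j, Function.Semiconj ξ (δA j) (δB j)) (θ : Theta ι) :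
    Function.Semiconj ξ (thetaApply δA θ) (thetaApply δB θ) := by
  intro x
  unfold thetaApply
  induction θ.support.toList with
  | nil => rfl
  | cons i t ih =>
    simp only [List.map_cons, List.foldr_cons, Function.comp_apply]
    rw [(h i).iterate_right (θ i), ih]

lemma thetaApply_translate (θ : Theta ι) :
    thetaApply (fun j η => η + Finsupp.single j 1) θ = (· + θ) := by
  induction θ using Finsupp.induction_linear with
  | zero => rw [thetaApply_zero]; funext η; exact (add_zero η).symm
  | add θ₁ θ₂ h₁ h₂ =>
    rw [thetaApply_add _ (fun i j η => add_right_comm _ _ _), h₁, h₂]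
    funext η
    exact (add_right_comm η θ₂ θ₁).trans (add_assoc η θ₁ θ₂)
  | single j m =>
    rw [thetaApply_single, add_right_iterate, Finsupp.smul_single, smul_eq_mul, mul_one]

lemma thetaApply_of_shift (δ : ι → A → A) (e : Theta ι → A)
    (h : ∀ j η, δ j (e η) = e (η + Finsupp.single j 1)) (θ η : Theta ι) :
    thetaApply δ θ (e η) = e (η + θ) := by
  rw [← (semiconj_thetaApply e (fun j η => (h j η).symm) θ η), thetaApply_translate]

end ThetaApply

section MapCoeff

variable {σ G : Type*} [FunLike G K K] [AddMonoidHomClass G K K]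

lemma mapCoeff_monomial (D : G) (m : σ →₀ ℕ) (c : K) :
    mapCoeff D (monomial m c) = monomial m (D c) := by
  unfold mapCoeff
  rw [← single_eq_monomial, AddMonoidAlgebra.coeff_single]
  exact Finsupp.sum_single_index (by rw [map_zero, monomial_zero])

lemma mapCoeff_C (D : G) (c : K) : mapCoeff D (C c : MvPolynomial σ K) = C (D c) :=
  mapCoeff_monomial D 0 c

lemma mapCoeff_add (D : G) (f g : MvPolynomial σ K) :
    mapCoeff D (f + g) = mapCoeff D f + mapCoeff D g := by
  unfold mapCoeff
  rw [AddMonoidAlgebra.coeff_add]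
  exact Finsupp.sum_add_index' (fun m => by rw [map_zero, monomial_zero])
    (fun m c₁ c₂ => by rw [map_add, map_add])

lemma mapCoeff_mul (D : Derivation ℤ K K) (f g : MvPolynomial σ K) :
    mapCoeff D (f * g) = mapCoeff D f * g + f * mapCoeff D g := by
  induction f using MvPolynomial.induction_on' with
  | add p q hp hq =>
    rw [add_mul, mapCoeff_add, hp, hq, mapCoeff_add]
    ring
  | monomial u a =>
    induction g using MvPolynomial.induction_on' with
    | add p q hp hq =>
      rw [mul_add, mapCoeff_add, hp, hq, mapCoeff_add]
      ring
    | monomial v b =>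
      rw [monomial_mul, mapCoeff_monomial, mapCoeff_monomial, mapCoeff_monomial, monomial_mul,
        monomial_mul, Derivation.leibniz, smul_eq_mul, smul_eq_mul, map_add, add_comm, mul_comm b]

lemma mapCoeff_X (D : Derivation ℤ K K) (v : σ) : mapCoeff D (X v : MvPolynomial σ K) = 0 := by
  rw [X, mapCoeff_monomial, Derivation.map_one_eq_zero, monomial_zero]

end MapCoeff

structure IsPointDerivation {A F : Type*} [Add A] [Mul A] [Add F] [Mul F] (ev ξ : A → F) :
    Prop where
  map_add : ∀ f g, ξ (f + g) = ξ f + ξ g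
  leibniz : ∀ f g, ξ (f * g) = ξ f * ev g + ev f * ξ g

namespace IsPointDerivation

lemma add {A F : Type*} [Add A] [Mul A] [CommSemiring F] {ev ξ η : A → F}
    (hξ : IsPointDerivation ev ξ) (hη : IsPointDerivation ev η) :
    IsPointDerivation ev (ξ + η) where
  map_add f g := by simp only [Pi.add_apply, hξ.map_add, hη.map_add]; ring
  leibniz f g := by simp only [Pi.add_apply, hξ.leibniz, hη.leibniz]; ring

lemma ext_mvPolynomial {σ R F : Type*} [CommSemiring R] [CommSemiring F]
    {ev ξ η : MvPolynomial σ R → F} (hξ : IsPointDerivation ev ξ) (hη : IsPointDerivation ev η)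
    (hC : ∀ c, ξ (C c) = η (C c)) (hX : ∀ v, ξ (X v) = η (X v)) : ξ = η := by
  funext f
  induction f using MvPolynomial.induction_on with
  | C c => exact hC c
  | add p q hp hq => rw [hξ.map_add, hη.map_add, hp, hq]
  | mul_X p v hp => rw [hξ.leibniz, hη.leibniz, hp, hX]

end IsPointDerivation

section SumPDeriv

variable {σ R F : Type*} [CommSemiring R] [CommSemiring F]

lemma sum_vars_pderiv_eq_of_subset (ev : MvPolynomial σ R →+* F) (B : σ → F)
    {f : MvPolynomial σ R} {s : Finset σ} (hs : f.vars ⊆ s) :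
    ∑ v ∈ f.vars, ev (pderiv v f) * B v = ∑ v ∈ s, ev (pderiv v f) * B v :=
  Finset.sum_subset hs fun v _ hv => by rw [pderiv_eq_zero_of_notMem_vars hv, map_zero, zero_mul]

lemma isPointDerivation_sum_pderiv (ev : MvPolynomial σ R →+* F) (B : σ → F) :
    IsPointDerivation ev fun f => ∑ v ∈ f.vars, ev (pderiv v f) * B v := by
  classical
  constructor
  · intro f g
    rw [sum_vars_pderiv_eq_of_subset ev B (vars_add_subset f g),
      sum_vars_pderiv_eq_of_subset ev B (Finset.subset_union_left (s₂ := g.vars)),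
      sum_vars_pderiv_eq_of_subset ev B (Finset.subset_union_right (s₁ := f.vars)),
      ← Finset.sum_add_distrib]
    refine Finset.sum_congr rfl fun v _ => ?_
    rw [map_add, map_add, add_mul]
  · intro f g
    rw [sum_vars_pderiv_eq_of_subset ev B (vars_mul f g),
      sum_vars_pderiv_eq_of_subset ev B (Finset.subset_union_left (s₂ := g.vars)),
      sum_vars_pderiv_eq_of_subset ev B (Finset.subset_union_right (s₁ := f.vars)),
      Finset.sum_mul, Finset.mul_sum, ← Finset.sum_add_distrib]
    refine Finset.sum_congr rfl fun v _ => ?_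
    rw [pderiv_mul, map_add, map_mul, map_mul]
    ring

end SumPDeriv

lemma isPointDerivation_mapCoeff {σ F : Type*} [CommSemiring F] (ev : MvPolynomial σ K →+* F)
    (D : Derivation ℤ K K) : IsPointDerivation ev fun f => ev (mapCoeff D f) where
  map_add f g := by rw [mapCoeff_add, map_add]
  leibniz f g := by rw [mapCoeff_mul, map_add, map_mul, map_mul]

section PolyDeriv

variable {κ ι : Type*} (δ : ι → Derivation ℤ K K) (j : ι)

lemma isPointDerivation_polyDeriv :
    IsPointDerivation id (polyDeriv (fun i => ⇑(δ i)) j : DPoly K κ ι → DPoly K κ ι) :=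
  (isPointDerivation_mapCoeff (RingHom.id _) (δ j)).add
    (isPointDerivation_sum_pderiv (RingHom.id _) fun v => X (v.1, v.2 + Finsupp.single j 1))

lemma polyDeriv_C (c : K) : polyDeriv (fun i => ⇑(δ i)) j (C c : DPoly K κ ι) = C (δ j c) := by
  simp [polyDeriv, mapCoeff_C]

variable [Nontrivial K]

lemma polyDeriv_X (v : DVar κ ι) :
    polyDeriv (fun i => ⇑(δ i)) j (X v : DPoly K κ ι) = X (v.1, v.2 + Finsupp.single j 1) := by
  simp [polyDeriv, mapCoeff_X]

lemma thetaApply_polyDeriv_X (θ : Theta ι) (k : κ) :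
    thetaApply (polyDeriv fun i => ⇑(δ i)) θ (X (k, 0) : DPoly K κ ι) = X (k, θ) := by
  simpa using thetaApply_of_shift _ (fun η => (X (k, η) : DPoly K κ ι))
    (fun j η => polyDeriv_X δ j (k, η)) θ 0

end PolyDeriv

section DevalAt

variable {κ ι A : Type*} [CommRing A] (φ : K →+* A)

lemma devalAt_polyDeriv [Nontrivial K] (δ : ι → Derivation ℤ K K) (δA : ι → Derivation ℤ A A)
    (hcomm : ∀ i j, Function.Commute (δA i) (δA j)) (hext : ∀ j c, δA j (φ c) = φ (δ j c))
    (a : κ → A) (j : ι) (f : DPoly K κ ι) :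
    devalAt φ (fun i => ⇑(δA i)) a (polyDeriv (fun i => ⇑(δ i)) j f)
      = δA j (devalAt φ (fun i => ⇑(δA i)) a f) := by
  induction f using MvPolynomial.induction_on with
  | C c => simp only [devalAt, polyDeriv_C, eval₂_C, hext]
  | add p q hp hq =>
    rw [(isPointDerivation_polyDeriv δ j).map_add]
    simp only [devalAt, eval₂_add, map_add] at hp hq ⊢
    rw [hp, hq]
  | mul_X p v hp =>
    rw [(isPointDerivation_polyDeriv δ j).leibniz, polyDeriv_X]
    simp only [devalAt, id, eval₂_add, eval₂_mul, eval₂_X, Derivation.leibniz, smul_eq_mul] at hp ⊢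
    rw [hp, thetaApply_add_single _ hcomm]
    ring

end DevalAt

section DRelEval

variable {κ ι A : Type*} [CommRing A] (φ : K →+* A) (δA : ι → A → A) (a b : κ → A)

lemma dRelEval_eq (D : K → K) (f : DPoly K κ ι) :
    dRelEval φ δA D a b f
      = ∑ v ∈ f.vars, devalAt φ δA a (pderiv v f) * thetaApply δA v.2 (b v.1)
        + devalAt φ δA a (mapCoeff D f) := by
  simp only [dRelEval, dRel, devalAt, eval₂_add, eval₂_sum, eval₂_mul, eval₂_X, eval₂_rename,
    Function.comp_def, Sum.elim_inl, Sum.elim_inr]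

lemma isPointDerivation_dRelEval (D : Derivation ℤ K K) :
    IsPointDerivation (devalAt φ δA a) (dRelEval φ δA D a b : DPoly K κ ι → A) := by
  rw [funext (dRelEval_eq φ δA a b D)]
  exact (isPointDerivation_sum_pderiv (eval₂Hom φ fun v : DVar κ ι => thetaApply δA v.2 (a v.1))
    fun v => thetaApply δA v.2 (b v.1)).add (isPointDerivation_mapCoeff _ D)

lemma dRelEval_C (D : Derivation ℤ K K) (c : K) :
    dRelEval φ δA D a b (C c : DPoly K κ ι) = φ (D c) := by
  simp [dRelEval_eq, mapCoeff_C, devalAt]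

lemma dRelEval_X [Nontrivial K] (D : Derivation ℤ K K) (v : DVar κ ι) :
    dRelEval φ δA D a b (X v : DPoly K κ ι) = thetaApply δA v.2 (b v.1) := by
  simp [dRelEval_eq, mapCoeff_X, devalAt]

end DRelEval

/-- A local Δ-derivation at `a` extending `D`, seen on `K{x}_Δ`; vanishing on `I(V/K)_Δ` is
not part of it. -/
structure IsLocalDerivation {κ ι A : Type*} [CommRing A] (φ : K →+* A) (δ : ι → K → K)
    (δA : ι → A → A) (D : K → K) (a : κ → A) (ξ : DPoly K κ ι → A) : Prop
    extends IsPointDerivation (devalAt φ δA a) ξ where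
  map_C : ∀ c, ξ (C c) = φ (D c)
  map_polyDeriv : ∀ j f, ξ (polyDeriv δ j f) = δA j (ξ f)

section LocalDerivation

variable {κ ι A : Type*} [CommRing A] [Nontrivial K] {φ : K →+* A} {δ : ι → Derivation ℤ K K}
  {D : Derivation ℤ K K}

lemma dRelEval_polyDeriv {δA : ι → Derivation ℤ A A} (hcomm : ∀ i j, Function.Commute (δA i) (δA j))
    (hext : ∀ j c, δA j (φ c) = φ (δ j c)) (hD : ∀ j c, D (δ j c) = δ j (D c))
    (a b : κ → A) (j : ι) (f : DPoly K κ ι) :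
    dRelEval φ (fun i => ⇑(δA i)) D a b (polyDeriv (fun i => ⇑(δ i)) j f)
      = δA j (dRelEval φ (fun i => ⇑(δA i)) D a b f) := by
  have hξ := isPointDerivation_dRelEval φ (fun i => ⇑(δA i)) a b D
  induction f using MvPolynomial.induction_on with
  | C c => rw [polyDeriv_C, dRelEval_C, dRelEval_C, hD, hext]
  | add p q hp hq =>
    rw [(isPointDerivation_polyDeriv δ j).map_add, hξ.map_add, hξ.map_add, hp, hq, map_add]
  | mul_X p v hp =>
    rw [(isPointDerivation_polyDeriv δ j).leibniz, hξ.map_add, hξ.leibniz, hξ.leibniz, hξ.leibniz,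
      hp, polyDeriv_X, devalAt_polyDeriv φ δ δA hcomm hext]
    simp only [dRelEval_X, devalAt, id, eval₂_X, map_add, Derivation.leibniz, smul_eq_mul]
    rw [thetaApply_add_single _ hcomm, thetaApply_add_single _ hcomm]
    ring

lemma isLocalDerivation_dRelEval {δA : ι → Derivation ℤ A A}
    (hcomm : ∀ i j, Function.Commute (δA i) (δA j)) (hext : ∀ j c, δA j (φ c) = φ (δ j c))
    (hD : ∀ j c, D (δ j c) = δ j (D c)) (a b : κ → A) :
    IsLocalDerivation φ (fun j => ⇑(δ j)) (fun j => ⇑(δA j)) D a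
      (dRelEval φ (fun j => ⇑(δA j)) D a b) where
  toIsPointDerivation := isPointDerivation_dRelEval φ _ a b D
  map_C := dRelEval_C φ _ a b D
  map_polyDeriv := dRelEval_polyDeriv hcomm hext hD a b

lemma IsLocalDerivation.eq_dRelEval {δA : ι → A → A} {a : κ → A} {ξ : DPoly K κ ι → A}
    (hξ : IsLocalDerivation φ (fun j => ⇑(δ j)) δA D a ξ) :
    ξ = dRelEval φ δA D a (fun k => ξ (X (k, 0))) := by
  refine hξ.ext_mvPolynomial (isPointDerivation_dRelEval φ δA a _ D) (fun c => ?_) (fun v => ?_)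
  · rw [hξ.map_C, dRelEval_C]
  · rw [dRelEval_X, ← thetaApply_polyDeriv_X δ v.2 v.1,
      semiconj_thetaApply ξ (fun j => hξ.map_polyDeriv j) v.2]

end LocalDerivation

theorem local_derivations_biject_with_prolongation_fibre_general
    {K : Type*} [Field K] {ℓ n : ℕ}
    (δ : Fin ℓ → K → K) (D : K → K)
    (hδadd : ∀ j x y, δ j (x + y) = δ j x + δ j y)
    (hδmul : ∀ j x y, δ j (x * y) = x * δ j y + δ j x * y)
    (hDadd : ∀ x y, D (x + y) = D x + D y)
    (hDmul : ∀ x y, D (x * y) = x * D y + D x * y)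
    (hDcomm : ∀ j x, D (δ j x) = δ j (D x))
    (I : Ideal (DPoly K (Fin n) (Fin ℓ)))
    (F : Type) [Field F] (φ : K →+* F) (δF : Fin ℓ → F → F)
    (hFadd : ∀ j x y, δF j (x + y) = δF j x + δF j y)
    (hFmul : ∀ j x y, δF j (x * y) = x * δF j y + δF j x * y)
    (hFcomm : ∀ i j x, δF i (δF j x) = δF j (δF i x))
    (hFext : ∀ j c, δF j (φ c) = φ (δ j c))
    (a : Fin n → F) :
    -- "ξ is a local Δ-derivation at a extending D":
    (∀ ξ : DPoly K (Fin n) (Fin ℓ) → F,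
      ((∀ f g, ξ (f + g) = ξ f + ξ g)
        ∧ (∀ f g, ξ (f * g) = ξ f * devalAt φ δF a g + devalAt φ δF a f * ξ g)
        ∧ (∀ c, ξ (C c) = φ (D c))
        ∧ (∀ j f, ξ (polyDeriv δ j f) = δF j (ξ f))
        ∧ (∀ f ∈ I, ξ f = 0))
      ↔
      -- ...iff ξ = ξ_b for a (unique) solution b of the linearized system:
      (∃ b : Fin n → F, (∀ f ∈ I, dRelEval φ δF D a b f = 0)
        ∧ ξ = fun f => dRelEval φ δF D a b f))
    ∧
    -- the mutually inverse correspondences: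
    (∀ b : Fin n → F, (∀ f ∈ I, dRelEval φ δF D a b f = 0) →
      (fun i => dRelEval φ δF D a b (X ((i : Fin n), (0 : Theta (Fin ℓ))))) = b)
    ∧
    (∀ ξ : DPoly K (Fin n) (Fin ℓ) → F,
      ((∀ f g, ξ (f + g) = ξ f + ξ g)
        ∧ (∀ f g, ξ (f * g) = ξ f * devalAt φ δF a g + devalAt φ δF a f * ξ g)
        ∧ (∀ c, ξ (C c) = φ (D c))
        ∧ (∀ j f, ξ (polyDeriv δ j f) = δF j (ξ f))
        ∧ (∀ f ∈ I, ξ f = 0)) →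
      (∀ f ∈ I, dRelEval φ δF D a (fun i => ξ (X (i, (0 : Theta (Fin ℓ))))) f = 0)
        ∧ ∀ f, dRelEval φ δF D a (fun i => ξ (X (i, (0 : Theta (Fin ℓ))))) f = ξ f) := by
  obtain ⟨δK, rfl⟩ : ∃ δK : Fin ℓ → Derivation ℤ K K, (fun j => ⇑(δK j)) = δ :=
    ⟨fun j => derivationOfLeibniz (δ j) (hδadd j) (hδmul j), rfl⟩
  obtain ⟨DK, rfl⟩ : ∃ DK : Derivation ℤ K K, ⇑DK = D := ⟨derivationOfLeibniz D hDadd hDmul, rfl⟩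
  obtain ⟨δL, rfl⟩ : ∃ δL : Fin ℓ → Derivation ℤ F F, (fun j => ⇑(δL j)) = δF :=
    ⟨fun j => derivationOfLeibniz (δF j) (hFadd j) (hFmul j), rfl⟩
  have hsol := isLocalDerivation_dRelEval (fun i j => hFcomm i j) hFext hDcomm a
  refine ⟨fun ξ => ⟨fun ⟨hadd, hmul, hC, hpoly, hI⟩ => ?_, ?_⟩, fun b _ => ?_,
    fun ξ ⟨hadd, hmul, hC, hpoly, hI⟩ => ?_⟩
  · have hξ := IsLocalDerivation.eq_dRelEval ⟨⟨hadd, hmul⟩, hC, hpoly⟩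
    exact ⟨_, fun f hf => hξ ▸ hI f hf, hξ⟩
  · rintro ⟨b, hb, rfl⟩
    exact ⟨(hsol b).map_add, (hsol b).leibniz, (hsol b).map_C, (hsol b).map_polyDeriv, hb⟩
  · funext i
    rw [dRelEval_X, thetaApply_zero, id]
  · have hξ := IsLocalDerivation.eq_dRelEval ⟨⟨hadd, hmul⟩, hC, hpoly⟩
    exact ⟨fun f hf => hξ ▸ hI f hf, fun f => by rw [← hξ]⟩

/-- Let `V` be an affine Δ-algebraic variety over `K` with defining
Δ-ideal `I`, `F` a Δ-field extension of `K`, and `a ∈ V(F)`.  Local Δ-derivations at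
`a` extending `D` (described on the coordinate Δ-ring, i.e. as additive maps
`ξ : K{x}_Δ → F` vanishing on `I`, commuting with Δ, with the twisted Leibniz rule
and extending `D` on constants) are in natural bijection with the solutions
`b ∈ F^n` of the system `{d_{D/Δ}f_a(u) = 0 : f ∈ I}`: the solution `b` gives
`ξ_b(f) = d_{D/Δ}f_a(b)`, and conversely `ξ` gives the solution `(ξ(x̄₁),…,ξ(x̄_n))`. -/
theorem local_derivations_biject_with_prolongation_fibre
    {K : Type*} [Field K] [CharZero K] {ℓ n : ℕ}
    (δ : Fin ℓ → K → K) (D : K → K)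
    (hδadd : ∀ j x y, δ j (x + y) = δ j x + δ j y)
    (hδmul : ∀ j x y, δ j (x * y) = x * δ j y + δ j x * y)
    (hDadd : ∀ x y, D (x + y) = D x + D y)
    (hDmul : ∀ x y, D (x * y) = x * D y + D x * y)
    (hδcomm : ∀ i j x, δ i (δ j x) = δ j (δ i x))
    (hDcomm : ∀ j x, D (δ j x) = δ j (D x))
    (I : Ideal (DPoly K (Fin n) (Fin ℓ)))
    (hIdiff : ∀ j, ∀ f ∈ I, polyDeriv δ j f ∈ I)
    (F : Type) [Field F] (φ : K →+* F) (δF : Fin ℓ → F → F)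
    (hFadd : ∀ j x y, δF j (x + y) = δF j x + δF j y)
    (hFmul : ∀ j x y, δF j (x * y) = x * δF j y + δF j x * y)
    (hFcomm : ∀ i j x, δF i (δF j x) = δF j (δF i x))
    (hFext : ∀ j c, δF j (φ c) = φ (δ j c))
    (a : Fin n → F) (haV : ∀ f ∈ I, devalAt φ δF a f = 0) :
    -- "ξ is a local Δ-derivation at a extending D":
    (∀ ξ : DPoly K (Fin n) (Fin ℓ) → F,
      ((∀ f g, ξ (f + g) = ξ f + ξ g)
        ∧ (∀ f g, ξ (f * g) = ξ f * devalAt φ δF a g + devalAt φ δF a f * ξ g)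
        ∧ (∀ c, ξ (C c) = φ (D c))
        ∧ (∀ j f, ξ (polyDeriv δ j f) = δF j (ξ f))
        ∧ (∀ f ∈ I, ξ f = 0))
      ↔
      -- ...iff ξ = ξ_b for a (unique) solution b of the linearized system:
      (∃ b : Fin n → F, (∀ f ∈ I, dRelEval φ δF D a b f = 0)
        ∧ ξ = fun f => dRelEval φ δF D a b f))
    ∧
    -- the mutually inverse correspondences:
    (∀ b : Fin n → F, (∀ f ∈ I, dRelEval φ δF D a b f = 0) →
      (fun i => dRelEval φ δF D a b (X ((i : Fin n), (0 : Theta (Fin ℓ))))) = b)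
    ∧
    (∀ ξ : DPoly K (Fin n) (Fin ℓ) → F,
      ((∀ f g, ξ (f + g) = ξ f + ξ g)
        ∧ (∀ f g, ξ (f * g) = ξ f * devalAt φ δF a g + devalAt φ δF a f * ξ g)
        ∧ (∀ c, ξ (C c) = φ (D c))
        ∧ (∀ j f, ξ (polyDeriv δ j f) = δF j (ξ f))
        ∧ (∀ f ∈ I, ξ f = 0)) →
      (∀ f ∈ I, dRelEval φ δF D a (fun i => ξ (X (i, (0 : Theta (Fin ℓ))))) f = 0)
        ∧ ∀ f, dRelEval φ δF D a (fun i => ξ (X (i, (0 : Theta (Fin ℓ))))) f = ξ f) :=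
  local_derivations_biject_with_prolongation_fibre_general δ D hδadd hδmul hDadd hDmul hDcomm I F φ
    δF hFadd hFmul hFcomm hFext a
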